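/- Let A be a nonnegative N×N matrix with spectral radius λ that possesses a strictly positive eigenvector. Let S₁ ⊆ {1,...,N} be the union of all final classes of A, and suppose u is a vector with A u = λ u and u_i > 0 for all i ∈ S₁. Then u_i > 0 for all i. -/

import Mathlib

open Matrix Filter Topology

noncomputable def sprad {n : Type*} [Fintype n] [DecidableEq n] (A : Matrix n n ℝ) : ℝ :=
  sSup ((fun z : ℂ => ‖z‖) '' spectrum ℂ (A.map (algebraMap ℝ ℂ)))

def Access {N : ℕ} (A : Matrix (Fin N) (Fin N) ℝ) (i j : Fin N) : Prop :=
  ∃ n : ℕ, 0 < (A ^ n) i j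

def IsClass {N : ℕ} (A : Matrix (Fin N) (Fin N) ℝ) (C : Finset (Fin N)) : Prop :=
  ∃ i : Fin N, ∀ j, j ∈ C ↔ (Access A i j ∧ Access A j i)

def IsFinalClass {N : ℕ} (A : Matrix (Fin N) (Fin N) ℝ) (C : Finset (Fin N)) : Prop :=
  IsClass A C ∧ ∀ i ∈ C, ∀ j, j ∉ C → ¬ Access A i j

noncomputable def restrict {N : ℕ} (A : Matrix (Fin N) (Fin N) ℝ) (C : Finset (Fin N)) :
    Matrix {x // x ∈ C} {x // x ∈ C} ℝ :=
  A.submatrix Subtype.val Subtype.val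

lemma powNonneg {N : ℕ} {A : Matrix (Fin N) (Fin N) ℝ} (hA : ∀ i j, 0 ≤ A i j) :
    ∀ n i j, 0 ≤ (A ^ n) i j := by
  intro n
  induction n with
  | zero => intro i j; by_cases h : i = j <;> simp [Matrix.one_apply, h]
  | succ n ih =>
    intro i j
    rw [pow_succ, Matrix.mul_apply]
    exact Finset.sum_nonneg fun k _ => mul_nonneg (ih i k) (hA k j)

lemma accessRefl {N : ℕ} (A : Matrix (Fin N) (Fin N) ℝ) (i : Fin N) : Access A i i :=
  ⟨0, by simp [Matrix.one_apply]⟩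

lemma accessTrans {N : ℕ} {A : Matrix (Fin N) (Fin N) ℝ} (hA : ∀ i j, 0 ≤ A i j)
    {i j k : Fin N} (h1 : Access A i j) (h2 : Access A j k) : Access A i k := by
  obtain ⟨m, hm⟩ := h1; obtain ⟨n, hn⟩ := h2
  refine ⟨m + n, ?_⟩
  rw [pow_add, Matrix.mul_apply]
  calc (0 : ℝ) < (A ^ m) i j * (A ^ n) j k := mul_pos hm hn
    _ ≤ _ := Finset.single_le_sum
        (f := fun l => (A ^ m) i l * (A ^ n) l k)
        (fun l _ => mul_nonneg (powNonneg hA m i l) (powNonneg hA n l k))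
        (Finset.mem_univ j)

lemma mulVecPow {N : ℕ} {A : Matrix (Fin N) (Fin N) ℝ} {v : Fin N → ℝ} {l : ℝ}
    (h : A.mulVec v = l • v) : ∀ n, (A ^ n).mulVec v = l ^ n • v := by
  intro n
  induction n with
  | zero => simp [Matrix.one_mulVec]
  | succ n ih =>
    rw [pow_succ, ← Matrix.mulVec_mulVec, h, Matrix.mulVec_smul, ih, pow_succ, smul_smul,
      mul_comm]

lemma zeroProp {N : ℕ} {A : Matrix (Fin N) (Fin N) ℝ} (hA : ∀ i j, 0 ≤ A i j)
    {v : Fin N → ℝ} {l : ℝ} (hv : ∀ i, 0 ≤ v i) (h : A.mulVec v = l • v)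
    {j : Fin N} (hvj : v j = 0) {k : Fin N} (hjk : Access A j k) : v k = 0 := by
  obtain ⟨n, hn⟩ := hjk
  have h1 : (A ^ n).mulVec v j = 0 := by
    rw [mulVecPow h n, Pi.smul_apply, smul_eq_mul, hvj, mul_zero]
  rw [Matrix.mulVec, dotProduct] at h1
  have h2 := (Finset.sum_eq_zero_iff_of_nonneg
    (fun l _ => mul_nonneg (powNonneg hA n j l) (hv l))).mp h1 k (Finset.mem_univ k)
  rcases mul_eq_zero.mp h2 with h | h
  · exact absurd h hn.ne'
  · exact h

lemma existsFinal {N : ℕ} {A : Matrix (Fin N) (Fin N) ℝ} (hA : ∀ i j, 0 ≤ A i j) (j : Fin N) :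
    ∃ (C : Finset (Fin N)) (m : Fin N),
      IsFinalClass A C ∧ m ∈ C ∧ Access A j m := by
  classical
  obtain ⟨m, hm, hmin⟩ := Finset.exists_min_image
    (Finset.univ.filter (fun k => Access A j k))
    (fun k => (Finset.univ.filter (fun l => Access A k l)).card)
    ⟨j, by simp [accessRefl]⟩
  have hjm : Access A j m := by simpa using hm
  have key : ∀ k, Access A m k → Access A k m := by
    intro k hmk
    have hjk : Access A j k := accessTrans hA hjm hmk
    have hsub : (Finset.univ.filter (fun l => Access A k l)) ⊆
        (Finset.univ.filter (fun l => Access A m l)) := by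
      intro l hl
      simp only [Finset.mem_filter, Finset.mem_univ, true_and] at hl ⊢
      exact accessTrans hA hmk hl
    have hcard := hmin k (by simp [hjk])
    have heq := Finset.eq_of_subset_of_card_le hsub hcard
    have : m ∈ Finset.univ.filter (fun l => Access A k l) := by
      rw [heq]; simp [accessRefl]
    simpa using this
  refine ⟨Finset.univ.filter (fun l => Access A m l ∧ Access A l m), m,
    ⟨⟨m, fun k => by simp [IsClass]⟩, ?_⟩, by simp [accessRefl], hjm⟩
  intro i hi k hk hik
  simp only [Finset.mem_filter, Finset.mem_univ, true_and] at hi hk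
  have hmk : Access A m k := accessTrans hA hi.1 hik
  exact hk ⟨hmk, key k hmk⟩

def IsBasicClass {N : ℕ} (A : Matrix (Fin N) (Fin N) ℝ) (C : Finset (Fin N)) : Prop :=
  IsClass A C ∧ sprad (restrict A C) = sprad A

def Irred {N : ℕ} (A : Matrix (Fin N) (Fin N) ℝ) : Prop :=
  ∀ i j, ∃ n : ℕ, 1 ≤ n ∧ 0 < (A ^ n) i j

def ProdProp {N : ℕ} (K : Finset (Matrix (Fin N) (Fin N) ℝ)) : Prop :=
  ∀ A ∈ K, ∀ B ∈ K, ∀ V : Finset (Fin N),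
    (Matrix.of fun i j => if i ∈ V then A i j else B i j) ∈ K

theorem stmt5 {N : ℕ} (A : Matrix (Fin N) (Fin N) ℝ) (hA : ∀ i j, 0 ≤ A i j)
    (hpos : ∃ w : Fin N → ℝ, (∀ i, 0 < w i) ∧ A.mulVec w = sprad A • w)
    (u : Fin N → ℝ) (hu : A.mulVec u = sprad A • u)
    (hS1 : ∀ i : Fin N, (∃ C : Finset (Fin N), IsFinalClass A C ∧ i ∈ C) → 0 < u i) :
    ∀ i, 0 < u i := by
  intro i0
  obtain ⟨w, hw, hAw⟩ := hpos
  by_contra hle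
  push_neg at hle
  obtain ⟨j, -, hj⟩ := Finset.exists_min_image Finset.univ (fun i => u i / w i)
    ⟨i0, Finset.mem_univ i0⟩
  set t := u j / w j with htdef
  have ht : t ≤ 0 :=
    le_trans (hj i0 (Finset.mem_univ i0)) (div_nonpos_iff.mpr (Or.inr ⟨hle, (hw i0).le⟩))
  set v : Fin N → ℝ := u - t • w with hvdef
  have hv : ∀ i, 0 ≤ v i := by
    intro i
    have h1 : t ≤ u i / w i := hj i (Finset.mem_univ i)
    have h2 : t * w i ≤ u i := (le_div_iff₀ (hw i)).mp h1
    simp only [hvdef, Pi.sub_apply, Pi.smul_apply, smul_eq_mul]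
    linarith
  have hvj : v j = 0 := by
    simp only [hvdef, Pi.sub_apply, Pi.smul_apply, smul_eq_mul, htdef]
    rw [div_mul_cancel₀ _ (hw j).ne']
    ring
  have hAv : A.mulVec v = sprad A • v := by
    rw [hvdef, Matrix.mulVec_sub, Matrix.mulVec_smul, hu, hAw, smul_sub, smul_comm]
  obtain ⟨C, m, hCfinal, hmC, hjm⟩ := existsFinal hA j
  have hum : 0 < u m := hS1 m ⟨C, hCfinal, hmC⟩
  have hvm : v m = 0 := zeroProp hA hv hAv hvj hjm
  simp only [hvdef, Pi.sub_apply, Pi.smul_apply, smul_eq_mul] at hvm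
  nlinarith [hw m]
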